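/- arXiv:0710.3693 — 4 statements merged into one kernel-verified Lean document; each statement's English description precedes it below -/
import Mathlib

section
/- Let μ₋₍ₙ₋₁₎ < ⋯ < μ₀ = 0 < ⋯ < μₙ₋₁ be real numbers with μ₋ₖ = −μₖ. Then for any complex numbers c₁, …, cₙ with c₁ ∈ ℝ, there exists a unique real-valued function w in the span of {e^{iμₖ t} : −(n−1) ≤ k ≤ n−1} on [0,1] such that ∫₀¹ e^{iμ_{k−1} s} w(s) ds = cₖ for k = 1, …, n. -/
/-!
Since `μ` is odd, `conj e^{iμₖt} = e^{iμ₋ₖt}`, so the span of the exponentials is closed under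
conjugation. If all `2n - 1` moments of `w` in the span vanish, then `∫₀¹ |w|² = ∫₀¹ conj w · w`
is a combination of them, so `w = 0` on `[0, 1]`; by analyticity `w = 0` on `ℝ`, and by Dedekind's
independence of characters all its coefficients vanish. Hence the square moment system is
invertible. Prescribing `cₖ₊₁` at `k ≥ 0` and its conjugate at `-k` gives a unique solution `w`,
and `conj w` solves the same system, so `w` is real. Conversely the negative moments of a real `w`
are the conjugates of its positive ones, which gives uniqueness.
-/

open Complex intervalIntegral Set
open scoped ComplexConjugate

noncomputable def expChar (a : ℝ) : Multiplicative ℝ →* ℂ where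
  toFun t := cexp (I * a * t.toAdd)
  map_one' := by simp
  map_mul' s t := by simp [mul_add, Complex.exp_add]

theorem expChar_injective : Function.Injective expChar := by
  intro a b h
  by_contra hab
  -- at `t = π / (a - b)` the two characters differ by the factor `e^{iπ} = -1`
  set t : ℝ := Real.pi / (a - b)
  have ht : I * a * t = I * b * t + Real.pi * I := by
    have : (a - b) * t = Real.pi := mul_div_cancel₀ _ (sub_ne_zero.2 hab)
    have : ((a : ℂ) - b) * t = Real.pi := by exact_mod_cast this
    linear_combination I * this
  have h_eq : cexp (I * a * t) = cexp (I * b * t) := DFunLike.congr_fun h (.ofAdd t)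
  rw [ht, Complex.exp_add, exp_pi_mul_I] at h_eq
  exact exp_ne_zero _ (by linear_combination -h_eq / 2)

theorem linearIndependent_cexp_I_mul :
    LinearIndependent ℂ (fun (a t : ℝ) => cexp (I * a * t)) :=
  (linearIndependent_monoidHom (Multiplicative ℝ) ℂ).comp expChar expChar_injective

variable {ι : Type*}

noncomputable def trigPoly (μ : ι → ℝ) (S : Finset ι) (d : ι → ℂ) (t : ℝ) : ℂ :=
  ∑ k ∈ S, d k * cexp (I * μ k * t)

noncomputable def expMoment (a : ℝ) (w : ℝ → ℂ) : ℂ :=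
  ∫ s in (0 : ℝ)..1, cexp (I * a * s) * w s

section trigPoly

variable (μ : ι → ℝ) (S : Finset ι) (d : ι → ℂ)

theorem continuous_trigPoly : Continuous (trigPoly μ S d) := by
  unfold trigPoly
  fun_prop

theorem analyticOnNhd_trigPoly : AnalyticOnNhd ℝ (trigPoly μ S d) univ := by
  intro t _
  unfold trigPoly
  refine Finset.analyticAt_fun_sum _ fun k _ => analyticAt_const.mul ?_
  apply analyticAt_cexp.restrictScalars.comp (analyticAt_const.mul (ofRealCLM.analyticAt t))

variable {μ S d}

theorem trigPoly_eq_zero_of_eqOn_Icc {a b : ℝ} (hab : a < b)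
    (h : EqOn (trigPoly μ S d) 0 (Icc a b)) : trigPoly μ S d = 0 := by
  funext t
  refine (analyticOnNhd_trigPoly μ S d).eqOn_zero_of_preconnected_of_eventuallyEq_zero
    isPreconnected_univ (mem_univ ((a + b) / 2)) ?_ (mem_univ t)
  exact Filter.eventuallyEq_of_mem (Icc_mem_nhds (by linarith) (by linarith)) h

theorem eq_zero_of_trigPoly_eq_zero (hμS : InjOn μ S) (h : trigPoly μ S d = 0) :
    ∀ k ∈ S, d k = 0 := by
  have hli := linearIndependent_cexp_I_mul.comp _ hμS.injective
  intro k hk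
  refine Fintype.linearIndependent_iff.1 hli (fun k => d k) ?_ ⟨k, hk⟩
  funext t
  have := congrFun h t
  rw [trigPoly, ← Finset.sum_coe_sort] at this
  simpa [Finset.sum_apply] using this

end trigPoly

theorem eqOn_zero_of_integral_conj_mul_self_eq_zero {f : ℝ → ℂ} {a b : ℝ} (hab : a < b)
    (hf : Continuous f) (h : ∫ s in a..b, conj (f s) * f s = 0) : EqOn f 0 (Icc a b) := by
  have h_normSq : ∫ s in a..b, normSq (f s) = 0 := by
    simp_rw [mul_comm (conj _), mul_conj] at h
    rw [integral_ofReal] at h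
    exact_mod_cast h
  intro s hs
  by_contra hfs
  refine (integral_pos hab (by fun_prop) (fun x _ => normSq_nonneg _) ⟨s, hs, ?_⟩).ne' h_normSq
  exact normSq_pos.2 hfs

theorem conj_cexp_I_mul (a t : ℝ) : conj (cexp (I * a * t)) = cexp (I * ↑(-a) * t) := by
  rw [← exp_conj]
  simp

theorem expMoment_conj (a : ℝ) (w : ℝ → ℂ) :
    expMoment a (fun s => conj (w s)) = conj (expMoment (-a) w) := by
  rw [expMoment, expMoment, ← intervalIntegral_conj]
  simp only [map_mul, conj_cexp_I_mul, neg_neg]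

theorem expMoment_neg_of_im_eq_zero {w : ℝ → ℂ} (hw : ∀ t, (w t).im = 0) (a : ℝ) :
    expMoment (-a) w = conj (expMoment a w) := by
  calc expMoment (-a) w = expMoment (-a) (fun s => conj (w s)) := by
        simp_rw [conj_eq_iff_im.2 (hw _)]
    _ = conj (expMoment a w) := by rw [expMoment_conj, neg_neg]

section moments

variable {μ : ι → ℝ} {S : Finset ι}

theorem integral_trigPoly_mul (d : ι → ℂ) {f : ℝ → ℂ} (hf : Continuous f) :
    ∫ s in (0 : ℝ)..1, trigPoly μ S d s * f s = ∑ k ∈ S, d k * expMoment (μ k) f := by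
  simp_rw [trigPoly, Finset.sum_mul]
  rw [integral_finsetSum fun k _ => (by fun_prop : Continuous _).intervalIntegrable _ _]
  refine Finset.sum_congr rfl fun k _ => ?_
  rw [expMoment, ← integral_const_mul]
  simp only [mul_assoc]

theorem expMoment_trigPoly (d : ι → ℂ) (a : ℝ) :
    expMoment a (trigPoly μ S d) = ∑ k ∈ S, d k * expMoment (μ k) (fun s => cexp (I * a * s)) := by
  simp_rw [expMoment, mul_comm (cexp _) (trigPoly μ S d _)]
  exact integral_trigPoly_mul d (by fun_prop)

variable [InvolutiveNeg ι] (hS : ∀ k ∈ S, -k ∈ S) (hμ : μ.Odd)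
include hS hμ

theorem conj_trigPoly (d : ι → ℂ) (t : ℝ) :
    conj (trigPoly μ S d t) = trigPoly μ S (fun k => conj (d (-k))) t := by
  simp only [trigPoly, map_sum, map_mul, conj_cexp_I_mul]
  refine Finset.sum_nbij' Neg.neg Neg.neg hS hS (by simp) (by simp) fun k _ => ?_
  rw [neg_neg, hμ]

theorem trigPoly_eq_zero_of_expMoment_eq_zero {d : ι → ℂ} (hμS : InjOn μ S)
    (h : ∀ j ∈ S, expMoment (μ j) (trigPoly μ S d) = 0) : ∀ k ∈ S, d k = 0 := by
  refine eq_zero_of_trigPoly_eq_zero hμS (trigPoly_eq_zero_of_eqOn_Icc zero_lt_one ?_)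
  refine eqOn_zero_of_integral_conj_mul_self_eq_zero zero_lt_one (continuous_trigPoly μ S d) ?_
  simp_rw [conj_trigPoly hS hμ]
  rw [integral_trigPoly_mul _ (continuous_trigPoly μ S d)]
  exact Finset.sum_eq_zero fun k hk => by rw [h k hk, mul_zero]

theorem trigPoly_eq_of_expMoment_eq {d d' : ι → ℂ} (hμS : InjOn μ S)
    (h : ∀ j ∈ S, expMoment (μ j) (trigPoly μ S d) = expMoment (μ j) (trigPoly μ S d')) :
    trigPoly μ S d = trigPoly μ S d' := by
  have h_sub : ∀ k ∈ S, (d - d') k = 0 :=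
    trigPoly_eq_zero_of_expMoment_eq_zero hS hμ hμS fun j hj => by
      simp only [expMoment_trigPoly, Pi.sub_apply, sub_mul, Finset.sum_sub_distrib] at h ⊢
      exact sub_eq_zero.2 (h j hj)
  funext t
  exact Finset.sum_congr rfl fun k hk => by rw [sub_eq_zero.1 (h_sub k hk)]

theorem exists_trigPoly_expMoment_eq (hμS : InjOn μ S) (b : ι → ℂ) :
    ∃ d, ∀ j ∈ S, expMoment (μ j) (trigPoly μ S d) = b j := by
  classical
  let A : Matrix S S ℂ := fun j k => expMoment (μ k) fun s => cexp (I * μ j * s)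
  let extend (x : S → ℂ) (k : ι) : ℂ := if h : k ∈ S then x ⟨k, h⟩ else 0
  have hA (x : S → ℂ) (j : S) : A.mulVec x j = expMoment (μ j) (trigPoly μ S (extend x)) := by
    rw [expMoment_trigPoly, ← Finset.sum_coe_sort]
    simp [Matrix.mulVec, dotProduct, extend, A, mul_comm]
  have hA_inj : Function.Injective A.mulVecLin := by
    rw [injective_iff_map_eq_zero]
    intro x hx
    funext k
    have := trigPoly_eq_zero_of_expMoment_eq_zero hS hμ hμS (d := extend x) fun j hj => by
      rw [← hA x ⟨j, hj⟩]
      exact congrFun hx _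
    simpa [extend] using this k k.2
  obtain ⟨x, hx⟩ := LinearMap.injective_iff_surjective.1 hA_inj fun j : S => b j
  exact ⟨extend x, fun j hj => by rw [← hA x ⟨j, hj⟩]; exact congrFun hx ⟨j, hj⟩⟩

theorem existsUnique_real_trigPoly_expMoment_eq (hμS : InjOn μ S) (b : ι → ℂ)
    (hb : ∀ j ∈ S, b (-j) = conj (b j)) :
    ∃! w : ℝ → ℂ, (∃ d, w = trigPoly μ S d) ∧ (∀ t, (w t).im = 0) ∧
      ∀ j ∈ S, expMoment (μ j) w = b j := by
  obtain ⟨d, hd⟩ := exists_trigPoly_expMoment_eq hS hμ hμS b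
  have h_conj : (fun t => conj (trigPoly μ S d t)) = trigPoly μ S d := by
    simp_rw [conj_trigPoly hS hμ]
    refine trigPoly_eq_of_expMoment_eq hS hμ hμS fun j hj => ?_
    rw [hd j hj, ← funext (conj_trigPoly hS hμ d), expMoment_conj, ← hμ, hd (-j) (hS j hj),
      hb j hj, conj_conj]
  refine ⟨trigPoly μ S d, ⟨⟨d, rfl⟩, fun t => conj_eq_iff_im.1 (congrFun h_conj t), hd⟩, ?_⟩
  rintro _ ⟨⟨d', rfl⟩, -, hd'⟩
  exact trigPoly_eq_of_expMoment_eq hS hμ hμS fun j hj => (hd' j hj).trans (hd j hj).symm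

end moments

noncomputable def hermitianExtension {n : ℕ} (c : Fin n → ℂ) (j : ℤ) : ℂ :=
  if h : j.natAbs < n then if 0 ≤ j then c ⟨j.natAbs, h⟩ else conj (c ⟨j.natAbs, h⟩) else 0

section hermitianExtension

variable {n : ℕ} {c : Fin n → ℂ}

theorem hermitianExtension_natCast (k : Fin n) : hermitianExtension c k = c k := by
  simp [hermitianExtension]

theorem hermitianExtension_neg (hn : 0 < n) (hc : (c ⟨0, hn⟩).im = 0) (j : ℤ) :
    hermitianExtension c (-j) = conj (hermitianExtension c j) := by
  rcases lt_trichotomy j 0 with hj | rfl | hj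
  · have : 0 ≤ -j := by omega
    simp only [hermitianExtension, Int.natAbs_neg, this, hj.not_ge]
    split_ifs <;> simp_all
  · simp [hermitianExtension, hn, conj_eq_iff_im.2 hc]
  · have : ¬0 ≤ -j := by omega
    simp only [hermitianExtension, Int.natAbs_neg, this, hj.le]
    split_ifs <;> simp_all

theorem expMoment_eq_hermitianExtension {μ : ℤ → ℝ} (hμ : μ.Odd) {w : ℝ → ℂ}
    (hw : ∀ t, (w t).im = 0) (h : ∀ k : Fin n, expMoment (μ k) w = c k) {j : ℤ}
    (hj : j.natAbs < n) : expMoment (μ j) w = hermitianExtension c j := by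
  rcases le_or_gt 0 j with hj₀ | hj₀
  · lift j to ℕ using hj₀
    exact (h ⟨j, hj⟩).trans (hermitianExtension_natCast ⟨j, hj⟩).symm
  · obtain ⟨k, rfl⟩ : ∃ k : ℕ, j = -k := ⟨j.natAbs, by omega⟩
    have hk : k ≠ 0 := by omega
    have hkn : k < n := by simpa using hj
    rw [hμ, expMoment_neg_of_im_eq_zero hw, h ⟨k, hkn⟩]
    simp [hermitianExtension, hk, hkn]

end hermitianExtension

theorem stmt_1_general (n : ℕ) (hn : 1 ≤ n) (μ : ℤ → ℝ)
    (hmono : ∀ j k : ℤ, 1 - (n : ℤ) ≤ j → j < k → k ≤ (n : ℤ) - 1 → μ j < μ k)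
    (hsym : ∀ k : ℤ, μ (-k) = -μ k)
    (c : Fin n → ℂ) (hc : (c ⟨0, hn⟩).im = 0) :
    ∃! w : ℝ → ℂ,
      (∃ d : ℤ → ℂ, ∀ t : ℝ,
        w t = ∑ k ∈ Finset.Icc (1 - (n : ℤ)) ((n : ℤ) - 1),
          d k * Complex.exp (Complex.I * (μ k : ℂ) * (t : ℂ))) ∧
      (∀ t : ℝ, (w t).im = 0) ∧
      (∀ k : Fin n,
        ∫ s in (0:ℝ)..1, Complex.exp (Complex.I * (μ (k : ℤ) : ℂ) * (s : ℂ)) * w s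
          = c k) := by
  set S := Finset.Icc (1 - (n : ℤ)) ((n : ℤ) - 1)
  have hS_natAbs (k : ℤ) : k ∈ S ↔ k.natAbs < n := by
    simp only [S, Finset.mem_Icc]
    omega
  have hS (k : ℤ) (hk : k ∈ S) : -k ∈ S := by
    simpa [hS_natAbs] using hk
  have hμS : InjOn μ S := StrictMonoOn.injOn fun j hj k hk hjk =>
    hmono j k (Finset.mem_Icc.1 hj).1 hjk (Finset.mem_Icc.1 hk).2
  obtain ⟨_, ⟨⟨d, rfl⟩, hw_real, hw_moment⟩, hw_unique⟩ :=
    existsUnique_real_trigPoly_expMoment_eq hS hsym hμS (hermitianExtension c)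
      fun j _ => hermitianExtension_neg hn hc j
  refine ⟨trigPoly μ S d, ⟨⟨d, fun t => rfl⟩, hw_real, fun k => ?_⟩, ?_⟩
  · rw [← hermitianExtension_natCast (c := c) k]
    exact hw_moment k ((hS_natAbs k).2 (by simp))
  · rintro w ⟨⟨d', hd'⟩, hw'_real, hw'_moment⟩
    exact hw_unique w ⟨⟨d', funext hd'⟩, hw'_real, fun j hj =>
      expMoment_eq_hermitianExtension hsym hw'_real hw'_moment ((hS_natAbs j).1 hj)⟩

/-- The trigonometric moment problem in the space `Eₙ` of real-valued
trigonometric polynomials with frequencies `μ₋₍ₙ₋₁₎ < ⋯ < μ₀ = 0 < ⋯ < μₙ₋₁`,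
`μ₋ₖ = −μₖ`: for any `c₁, …, cₙ ∈ ℂ` with `c₁ ∈ ℝ` there is a unique real-valued
`w` in the span of the exponentials `e^{iμₖ t}` with
`∫₀¹ e^{iμ_{k−1} s} w(s) ds = cₖ` for `k = 1, …, n`. -/
theorem stmt_1 (n : ℕ) (hn : 1 ≤ n) (μ : ℤ → ℝ)
    (hmono : ∀ j k : ℤ, 1 - (n : ℤ) ≤ j → j < k → k ≤ (n : ℤ) - 1 → μ j < μ k)
    (hμ0 : μ 0 = 0) (hsym : ∀ k : ℤ, μ (-k) = -μ k)
    (c : Fin n → ℂ) (hc : (c ⟨0, hn⟩).im = 0) :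
    ∃! w : ℝ → ℂ,
      (∃ d : ℤ → ℂ, ∀ t : ℝ,
        w t = ∑ k ∈ Finset.Icc (1 - (n : ℤ)) ((n : ℤ) - 1),
          d k * Complex.exp (Complex.I * (μ k : ℂ) * (t : ℂ))) ∧
      (∀ t : ℝ, (w t).im = 0) ∧
      (∀ k : Fin n,
        ∫ s in (0:ℝ)..1, Complex.exp (Complex.I * (μ (k : ℤ) : ℂ) * (s : ℂ)) * w s
          = c k) :=
  stmt_1_general n hn μ hmono hsym c hc
end

section
/- Let Λ and B be Hermitian n×n matrices, e₁ a unit eigenvector of Λ with eigenvalue λ₁, and suppose ⟨Be₁, e₁⟩ ≠ 0 and the eigenvalues λ₁ < λ₂ < ⋯ < λₙ of Λ are distinct. Then the map γ ↦ det(Λ + γB − λ₁ I) is a polynomial in γ whose first-order coefficient equals ⟨Be₁, e₁⟩ (λ₂ − λ₁)⋯(λₙ − λ₁), which is nonzero. Consequently, for every η > 0 there exists γ with |γ| < η such that λ₁ is not an eigenvalue of Λ + γB. -/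
/-!
In the orthonormal eigenbasis `e`, the matrix of `Λ + γ B - λ₀ I` is `D + γ B'` with
`D = diagonal (λⱼ - λ₀)` and `B' i j = ⟪e i, B e j⟫`. Since `D 0 0 = 0`, column `0` of `D + X B'`
is divisible by `X`, so `det (D + X B') = X * Q` where `Q(0)` is the determinant of `D` with
column `0` replaced by that of `B'`: a lower triangular matrix with diagonal
`B' 0 0, λ₁ - λ₀, …, λₙ - λ₀`. The resulting polynomial is nonzero, so it has finitely many roots
and some small real `γ` avoids them.
-/

open Complex Matrix Polynomial

namespace Matrix

variable {R ι : Type*} [CommRing R] [Fintype ι] [DecidableEq ι]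

theorem eval_det_map_C_add_X_smul (D A : Matrix ι ι R) (r : R) :
    (D.map C + (X : R[X]) • A.map C).det.eval r = (D + r • A).det := by
  rw [← coe_evalRingHom, RingHom.map_det]
  congr 1
  ext i j
  simp only [RingHom.mapMatrix_apply, map_apply, add_apply, smul_apply, smul_eq_mul, map_add,
    coe_evalRingHom, eval_C, eval_mul, eval_X]

theorem det_updateCol_zero_diagonal {n : ℕ} (d v : Fin (n + 1) → R) :
    ((diagonal d).updateCol 0 v).det = v 0 * ∏ j : Fin n, d j.succ := by
  rw [det_of_isLowerTriangular _ fun i j (hij : i < j) => ?_, Fin.prod_univ_succ]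
  · simp [Fin.succ_ne_zero]
  · simp [(Fin.pos_of_ne_zero _ : 0 < j) |>.ne', hij.ne, (i.zero_le.trans_lt hij).ne']

theorem coeff_one_det_diagonal_add_X_smul {n : ℕ} (d : Fin (n + 1) → R) (hd : d 0 = 0)
    (A : Matrix (Fin (n + 1)) (Fin (n + 1)) R) :
    ((diagonal d).map C + (X : R[X]) • A.map C).det.coeff 1 = A 0 0 * ∏ j : Fin n, d j.succ := by
  set M := (diagonal d).map C + (X : R[X]) • A.map C
  have hcol : (fun i => M i 0) = (X : R[X]) • fun i => C (A i 0) := by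
    ext1 i
    rcases eq_or_ne i 0 with rfl | hi
    · simp [M, hd]
    · simp [M, hi]
  have hM0 : M.map (eval 0) = diagonal d := by
    ext i j
    rcases eq_or_ne i j with rfl | hij <;> simp [M, *]
  rw [← updateCol_eq_self M 0, hcol, det_updateCol_smul]
  simp only [coeff_X_mul, coeff_zero_eq_eval_zero]
  rw [← coe_evalRingHom, RingHom.map_det, RingHom.mapMatrix_apply, map_updateCol]
  change ((M.map (eval 0)).updateCol 0 _).det = _
  rw [hM0, det_updateCol_zero_diagonal]
  simp

end Matrix

theorem LinearMap.det_eq_det_inner {𝕜 E ι : Type*} [RCLike 𝕜] [NormedAddCommGroup E]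
    [InnerProductSpace 𝕜 E] [Fintype ι] [DecidableEq ι] (b : OrthonormalBasis ι 𝕜 E)
    (f : E →ₗ[𝕜] E) : LinearMap.det f = (of fun i j => inner 𝕜 (b i) (f (b j))).det := by
  rw [← LinearMap.det_toMatrix b.toBasis]
  congr 1
  ext i j
  simp [LinearMap.toMatrix_apply, b.repr_apply_apply]

namespace Matrix

variable {𝕜 ι : Type*} [RCLike 𝕜] [Fintype ι] [DecidableEq ι]

theorem det_toEuclideanLin (M : Matrix ι ι 𝕜) : LinearMap.det (toEuclideanLin M) = M.det := by
  rw [toEuclideanLin_eq_toLin_orthonormal, LinearMap.det_toLin]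

theorem det_eq_det_inner_of_orthonormal (M : Matrix ι ι 𝕜) {e : ι → EuclideanSpace 𝕜 ι}
    (he : Orthonormal 𝕜 e) :
    M.det = (of fun i j => inner 𝕜 (e i) (toEuclideanLin M (e j))).det := by
  have hspan := he.linearIndependent.span_eq_top_of_card_eq_finrank' (by simp)
  rw [← det_toEuclideanLin, LinearMap.det_eq_det_inner (.mk he hspan.ge)]
  simp

end Matrix

theorem Polynomial.exists_abs_lt_eval_ofReal_ne_zero {p : ℂ[X]} (hp : p ≠ 0) {η : ℝ}
    (hη : 0 < η) : ∃ γ : ℝ, |γ| < η ∧ p.eval (γ : ℂ) ≠ 0 := by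
  by_contra! h
  refine hp (eq_zero_of_infinite_isRoot p ?_)
  refine ((Set.Ioo_infinite hη).image ofReal_injective.injOn).mono ?_
  rintro _ ⟨γ, hγ, rfl⟩
  exact h γ (abs_lt.2 ⟨by linarith [hγ.1], hγ.2⟩)

theorem stmt_4_general {n : ℕ} (Λ B : Matrix (Fin (n + 1)) (Fin (n + 1)) ℂ)
    (e : Fin (n + 1) → EuclideanSpace ℂ (Fin (n + 1)))
    (he : Orthonormal ℂ e)
    (lam : Fin (n + 1) → ℝ) (hlam : StrictMono lam)
    (hev : ∀ j, Matrix.toEuclideanLin Λ (e j) = ((lam j : ℂ)) • e j)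
    (hB11 : (inner ℂ (e 0) (Matrix.toEuclideanLin B (e 0)) : ℂ) ≠ 0) :
    (∃ P : Polynomial ℂ,
      (∀ γ : ℂ, P.eval γ = (Λ + γ • B - (lam 0 : ℂ) • (1 : Matrix (Fin (n + 1)) (Fin (n + 1)) ℂ)).det) ∧
      P.coeff 1 = (inner ℂ (e 0) (Matrix.toEuclideanLin B (e 0)) : ℂ) *
        ∏ j : Fin n, ((lam j.succ : ℂ) - (lam 0 : ℂ)) ∧
      P.coeff 1 ≠ 0) ∧
    (∀ η : ℝ, 0 < η → ∃ γ : ℝ, |γ| < η ∧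
      (Λ + (γ : ℂ) • B - (lam 0 : ℂ) • (1 : Matrix (Fin (n + 1)) (Fin (n + 1)) ℂ)).det ≠ 0) := by
  set B' : Matrix (Fin (n + 1)) (Fin (n + 1)) ℂ :=
    of fun i j => inner ℂ (e i) (toEuclideanLin B (e j))
  set d : Fin (n + 1) → ℂ := fun j => lam j - lam 0
  set P := ((diagonal d).map C + (X : ℂ[X]) • B'.map C).det
  have hP (γ : ℂ) : P.eval γ = (Λ + γ • B - (lam 0 : ℂ) • 1).det := by
    rw [eval_det_map_C_add_X_smul, det_eq_det_inner_of_orthonormal (Λ + γ • B - _) he]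
    congr 1
    ext i j
    simp only [of_apply, map_add, map_sub, map_smul, toLpLin_one, LinearMap.add_apply,
      LinearMap.sub_apply, LinearMap.smul_apply, LinearMap.id_apply, hev, inner_add_right,
      inner_sub_right, inner_smul_right, orthonormal_iff_ite.mp he]
    rcases eq_or_ne i j with rfl | hij
    · simp [B', d]
      ring
    · simp [B', hij]
  have hcoeff : P.coeff 1 = B' 0 0 * ∏ j : Fin n, d j.succ :=
    coeff_one_det_diagonal_add_X_smul d (sub_self _) B'
  have hne : P.coeff 1 ≠ 0 := by
    rw [hcoeff]
    refine mul_ne_zero hB11 (Finset.prod_ne_zero_iff.2 fun j _ => sub_ne_zero.2 ?_)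
    exact_mod_cast (hlam j.succ_pos).ne'
  refine ⟨⟨P, hP, hcoeff, hne⟩, fun η hη => ?_⟩
  have hP0 : P ≠ 0 := fun h => hne (by rw [h, coeff_zero])
  obtain ⟨γ, hγ, hPγ⟩ := exists_abs_lt_eval_ofReal_ne_zero hP0 hη
  exact ⟨γ, hγ, hP γ ▸ hPγ⟩

/-- For Hermitian `Λ`, `B` with orthonormal eigenbasis `e` of `Λ`, distinct
eigenvalues `λ₀ < λ₁ < ⋯`, and `⟨Be₁,e₁⟩ ≠ 0`, the polynomial
`γ ↦ det(Λ + γB − λ₁ I)` has first-order coefficient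
`⟨Be₁,e₁⟩ (λ₂ − λ₁)⋯(λₙ − λ₁) ≠ 0`; consequently arbitrarily small `γ` exist
for which `λ₁` is not an eigenvalue of `Λ + γB`. -/
theorem stmt_4 {n : ℕ} (Λ B : Matrix (Fin (n + 1)) (Fin (n + 1)) ℂ)
    (hΛ : Λ.IsHermitian) (hB : B.IsHermitian)
    (e : Fin (n + 1) → EuclideanSpace ℂ (Fin (n + 1)))
    (he : Orthonormal ℂ e)
    (lam : Fin (n + 1) → ℝ) (hlam : StrictMono lam)
    (hev : ∀ j, Matrix.toEuclideanLin Λ (e j) = ((lam j : ℂ)) • e j)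
    (hB11 : (inner ℂ (e 0) (Matrix.toEuclideanLin B (e 0)) : ℂ) ≠ 0) :
    (∃ P : Polynomial ℂ,
      (∀ γ : ℂ, P.eval γ = (Λ + γ • B - (lam 0 : ℂ) • (1 : Matrix (Fin (n + 1)) (Fin (n + 1)) ℂ)).det) ∧
      P.coeff 1 = (inner ℂ (e 0) (Matrix.toEuclideanLin B (e 0)) : ℂ) *
        ∏ j : Fin n, ((lam j.succ : ℂ) - (lam 0 : ℂ)) ∧
      P.coeff 1 ≠ 0) ∧
    (∀ η : ℝ, 0 < η → ∃ γ : ℝ, |γ| < η ∧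
      (Λ + (γ : ℂ) • B - (lam 0 : ℂ) • (1 : Matrix (Fin (n + 1)) (Fin (n + 1)) ℂ)).det ≠ 0) :=
  stmt_4_general Λ B e he lam hlam hev hB11
end

section
/- Let (Ω, ℱ, ℙ) be a probability space, ℓ and T(n), n ≥ 0, be ℕ∪{∞}-valued random variables, and suppose: (a) 𝔼 e^{α T(n)} ≤ Cⁿ for all n ≥ 1, where α > 0, C ≥ 1; (b) ℙ{ℓ > T(n+1)} ≤ pⁿ for all n ≥ 0, where p ∈ (0,1); (c) ℓ ≤ sup_n T(n) whenever ℓ < ∞ in the sense that for each ω with ℓ(ω) < ∞ there is n with T(n) < ℓ ≤ T(n+1), or ℓ ≤ T(1). Then for r > 1 with C^{1/r} p^{1−1/r} < 1 and any c > 0 with rc < α, one has 𝔼 e^{cℓ} ≤ 1 + C^{1/r} p^{(1/r)−1} Σ_{n≥0} (C^{1/r} p^{1−1/r})ⁿ < ∞. -/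
/-! Split `Ω`, up to a null set, according to the first index `n` with `ℓ ≤ T (n + 1)`; almost
surely there is one, since `ℙ{T(n+1) < ℓ} ≤ pⁿ → 0`. For `n ≥ 1` the `n`-th piece lies in
`{T n < ℓ}`, so it has probability at most `pⁿ⁻¹`, and on it `e^{cℓ} ≤ e^{c T(n+1)}`. Hölder's
inequality with exponents `r` and `r / (r - 1)` bounds the contribution of the `n`-th piece by
`(𝔼 e^{rc T(n+1)})^{1/r} ℙ(piece)^{1-1/r} ≤ C^{(n+1)/r} p^{(n-1)(1-1/r)}`, a geometric sequence of
ratio `C^{1/r} p^{1-1/r} < 1`. -/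

open MeasureTheory ENNReal

/-- `eexp α m` is `e^{α m} ∈ ℝ≥0∞` for `m ∈ ℕ ∪ {∞}` (for `α ≥ 0`). -/
noncomputable def eexp (α : ℝ) (m : ℕ∞) : ℝ≥0∞ :=
  ⨆ n : ℕ, if (n : ℕ∞) ≤ m then ENNReal.ofReal (Real.exp (α * n)) else 0

lemma eexp_mono (c : ℝ) : Monotone (eexp c) := fun _ _ h =>
  iSup_mono fun n => by
    split_ifs with h₁ h₂
    exacts [le_rfl, absurd (h₁.trans h) h₂, zero_le, le_rfl]

lemma eexp_rpow_le {c α r : ℝ} (hr : 0 < r) (h : c * r ≤ α) (m : ℕ∞) :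
    eexp c m ^ r ≤ eexp α m := by
  have hmap := (ENNReal.orderIsoRpow r hr).map_iSup
    fun n : ℕ => if (n : ℕ∞) ≤ m then ENNReal.ofReal (Real.exp (c * n)) else 0
  simp only [ENNReal.orderIsoRpow_apply] at hmap
  rw [eexp, hmap]
  refine iSup_mono fun n => ?_
  split_ifs
  · rw [ENNReal.ofReal_rpow_of_pos (Real.exp_pos _), ← Real.exp_mul]
    exact ENNReal.ofReal_le_ofReal (Real.exp_le_exp.2 (by nlinarith [n.cast_nonneg (α := ℝ)]))
  · simp [hr]

section GeneralMeasure

variable {X : Type*} [MeasurableSpace X] {μ : Measure X}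

lemma setLIntegral_le_rpow_mul_measure_rpow {s : Set X} {f : X → ℝ≥0∞} {r : ℝ} (hr : 1 < r)
    (hf : AEMeasurable f (μ.restrict s)) :
    ∫⁻ x in s, f x ∂μ ≤ (∫⁻ x in s, f x ^ r ∂μ) ^ (1 / r) * μ s ^ (1 - 1 / r) := by
  have hrq := Real.HolderConjugate.conjExponent hr
  rw [one_div r, hrq.one_sub_inv, ← one_div]
  simpa using ENNReal.lintegral_mul_le_Lp_mul_Lq (μ.restrict s) hrq hf
    (aemeasurable_const (b := (1 : ℝ≥0∞)))

lemma lintegral_eq_tsum_disjointed {s : ℕ → Set X} (hs : ∀ n, MeasurableSet (s n))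
    (h : ∀ᵐ x ∂μ, x ∈ ⋃ n, s n) (f : X → ℝ≥0∞) :
    ∫⁻ x, f x ∂μ = ∑' n, ∫⁻ x in disjointed s n, f x ∂μ := by
  rw [← lintegral_iUnion (MeasurableSet.disjointed hs) (disjoint_disjointed s),
    iUnion_disjointed, Measure.restrict_eq_self_of_ae_mem h]

lemma measure_iInter_eq_zero_of_le_pow {s : ℕ → Set X} {p : ℝ} (hp0 : 0 ≤ p) (hp1 : p < 1)
    (h : ∀ n, μ (s n) ≤ ENNReal.ofReal (p ^ n)) : μ (⋂ n, s n) = 0 := by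
  have hlim : Filter.Tendsto (fun n : ℕ => ENNReal.ofReal (p ^ n)) Filter.atTop (nhds 0) := by
    simpa using ENNReal.tendsto_ofReal (tendsto_pow_atTop_nhds_zero_of_lt_one hp0 hp1)
  exact le_antisymm
    (ge_of_tendsto' hlim fun n => (measure_mono (Set.iInter_subset s n)).trans (h n)) zero_le

end GeneralMeasure

lemma rpow_pow_mul_rpow_eq {C p r : ℝ} (hC : 0 < C) (hp : 0 < p) (n : ℕ) :
    (C ^ (n + 1)) ^ (1 / r) * (p ^ ((n : ℝ) - 1)) ^ (1 - 1 / r)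
      = C ^ (1 / r) * p ^ (1 / r - 1) * (C ^ (1 / r) * p ^ (1 - 1 / r)) ^ n := by
  rw [mul_pow, ← Real.rpow_natCast (C ^ (1 / r)), ← Real.rpow_natCast (p ^ (1 - 1 / r)),
    ← Real.rpow_natCast C, ← Real.rpow_mul hC.le, ← Real.rpow_mul hp.le, ← Real.rpow_mul hC.le,
    ← Real.rpow_mul hp.le, mul_mul_mul_comm, ← Real.rpow_add hC, ← Real.rpow_add hp]
  congr 2 <;> push_cast <;> ring

section FirstCover

variable {Ω : Type*} [MeasurableSpace Ω] {P : Measure Ω} {ℓ : Ω → ℕ∞} {T : ℕ → Ω → ℕ∞}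

/-- A measurable version of the event that `n` is the first index with `ℓ ≤ T (n + 1)`; taking
measurable hulls of the events `{T (n + 1) < ℓ}` removes any need for `ℓ` and `T` to be
measurable. -/
noncomputable def firstCover (P : Measure Ω) (ℓ : Ω → ℕ∞) (T : ℕ → Ω → ℕ∞) : ℕ → Set Ω :=
  disjointed fun n => (toMeasurable P {ω | T (n + 1) ω < ℓ ω})ᶜ

lemma measurableSet_firstCover (n : ℕ) : MeasurableSet (firstCover P ℓ T n) :=
  MeasurableSet.disjointed (fun _ => (measurableSet_toMeasurable _ _).compl) n

lemma le_of_mem_firstCover {n : ℕ} {ω : Ω} (h : ω ∈ firstCover P ℓ T n) : ℓ ω ≤ T (n + 1) ω :=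
  not_lt.1 fun hlt => disjointed_subset _ n h (subset_toMeasurable P _ hlt)

lemma firstCover_add_one_subset (n : ℕ) :
    firstCover P ℓ T (n + 1) ⊆ toMeasurable P {ω | T (n + 1) ω < ℓ ω} := by
  intro ω hω
  rw [firstCover, disjointed_add_one] at hω
  by_contra h
  exact hω.2 (le_partialSups (fun n => (toMeasurable P {ω | T (n + 1) ω < ℓ ω})ᶜ) n h)

lemma measure_firstCover_le [IsProbabilityMeasure P] {p : ℝ} (hp0 : 0 < p) (hp1 : p ≤ 1)
    (hb : ∀ n : ℕ, P {ω | T (n + 1) ω < ℓ ω} ≤ ENNReal.ofReal (p ^ n)) (n : ℕ) :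
    P (firstCover P ℓ T n) ≤ ENNReal.ofReal (p ^ ((n : ℝ) - 1)) := by
  cases n with
  | zero =>
    refine prob_le_one.trans (ENNReal.one_le_ofReal.2 ?_)
    exact Real.one_le_rpow_of_pos_of_le_one_of_nonpos hp0 hp1 (by norm_num)
  | succ n =>
    rw [Nat.cast_succ, add_sub_cancel_right, Real.rpow_natCast]
    exact (measure_mono (firstCover_add_one_subset n)).trans
      ((measure_toMeasurable _).trans_le (hb n))

lemma lintegral_eq_tsum_firstCover {p : ℝ} (hp0 : 0 ≤ p) (hp1 : p < 1)
    (hb : ∀ n : ℕ, P {ω | T (n + 1) ω < ℓ ω} ≤ ENNReal.ofReal (p ^ n)) (f : Ω → ℝ≥0∞) :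
    ∫⁻ ω, f ω ∂P = ∑' n, ∫⁻ ω in firstCover P ℓ T n, f ω ∂P := by
  refine lintegral_eq_tsum_disjointed (fun _ => (measurableSet_toMeasurable _ _).compl) ?_ f
  rw [ae_iff]
  refine measure_mono_null (fun ω hω => by simpa using hω) (measure_iInter_eq_zero_of_le_pow hp0 hp1
    fun n => (measure_toMeasurable _).trans_le (hb n))

lemma setLIntegral_firstCover_le [IsProbabilityMeasure P] {α C p r c : ℝ} (hC : 0 < C)
    (hp0 : 0 < p) (hp1 : p ≤ 1) (hr : 1 < r) (hrc : r * c ≤ α)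
    (ha : ∀ n : ℕ, 1 ≤ n → ∫⁻ ω, eexp α (T n ω) ∂P ≤ ENNReal.ofReal (C ^ n))
    (hb : ∀ n : ℕ, P {ω | T (n + 1) ω < ℓ ω} ≤ ENNReal.ofReal (p ^ n))
    {g : Ω → ℝ≥0∞} (hg : Measurable g) (hgℓ : ∀ ω, g ω ≤ eexp c (ℓ ω)) (n : ℕ) :
    ∫⁻ ω in firstCover P ℓ T n, g ω ∂P ≤
      ENNReal.ofReal (C ^ (1 / r) * p ^ (1 / r - 1) * (C ^ (1 / r) * p ^ (1 - 1 / r)) ^ n) := by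
  have hr0 : 0 < r := zero_lt_one.trans hr
  have hmoment : ∫⁻ ω in firstCover P ℓ T n, g ω ^ r ∂P ≤ ENNReal.ofReal (C ^ (n + 1)) :=
    calc ∫⁻ ω in firstCover P ℓ T n, g ω ^ r ∂P
        ≤ ∫⁻ ω in firstCover P ℓ T n, eexp α (T (n + 1) ω) ∂P :=
          setLIntegral_mono' (measurableSet_firstCover n) fun ω hω =>
            calc g ω ^ r ≤ eexp c (T (n + 1) ω) ^ r :=
                  ENNReal.rpow_le_rpow ((hgℓ ω).trans (eexp_mono c (le_of_mem_firstCover hω)))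
                    hr0.le
              _ ≤ eexp α (T (n + 1) ω) := eexp_rpow_le hr0 (by linarith) _
      _ ≤ ∫⁻ ω, eexp α (T (n + 1) ω) ∂P := setLIntegral_le_lintegral _ _
      _ ≤ _ := ha (n + 1) (Nat.le_add_left 1 n)
  calc ∫⁻ ω in firstCover P ℓ T n, g ω ∂P
      ≤ (∫⁻ ω in firstCover P ℓ T n, g ω ^ r ∂P) ^ (1 / r) * P (firstCover P ℓ T n) ^ (1 - 1 / r) :=
        setLIntegral_le_rpow_mul_measure_rpow hr hg.aemeasurable
    _ ≤ ENNReal.ofReal (C ^ (n + 1)) ^ (1 / r) *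
          ENNReal.ofReal (p ^ ((n : ℝ) - 1)) ^ (1 - 1 / r) := by
        refine mul_le_mul' (ENNReal.rpow_le_rpow hmoment (by positivity))
          (ENNReal.rpow_le_rpow (measure_firstCover_le hp0 hp1 hb n) ?_)
        exact sub_nonneg.2 ((div_le_one hr0).2 hr.le)
    _ = _ := by
        rw [ENNReal.ofReal_rpow_of_pos (by positivity), ENNReal.ofReal_rpow_of_pos (by positivity),
          ← ENNReal.ofReal_mul (by positivity), rpow_pow_mul_rpow_eq hC hp0]

end FirstCover

theorem stmt_6_general {Ω : Type*} [MeasurableSpace Ω] (P : Measure Ω)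
    [IsProbabilityMeasure P] (ℓ : Ω → ℕ∞) (T : ℕ → Ω → ℕ∞)
    (α C p : ℝ) (hC : 1 ≤ C) (hp0 : 0 < p) (hp1 : p < 1)
    (ha : ∀ n : ℕ, 1 ≤ n → ∫⁻ ω, eexp α (T n ω) ∂P ≤ ENNReal.ofReal (C ^ n))
    (hb : ∀ n : ℕ, P {ω | T (n + 1) ω < ℓ ω} ≤ ENNReal.ofReal (p ^ n)) :
    ∀ r : ℝ, 1 < r → C ^ (1 / r) * p ^ (1 - 1 / r) < 1 →
      ∀ c : ℝ, 0 < c → r * c < α →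
        (∫⁻ ω, eexp c (ℓ ω) ∂P ≤
          ENNReal.ofReal (1 + C ^ (1 / r) * p ^ (1 / r - 1) *
            ∑' n : ℕ, (C ^ (1 / r) * p ^ (1 - 1 / r)) ^ n)) ∧
        (∫⁻ ω, eexp c (ℓ ω) ∂P < ⊤) := by
  intro r hr hs c _ hrc
  set s := C ^ (1 / r) * p ^ (1 - 1 / r)
  set K := C ^ (1 / r) * p ^ (1 / r - 1)
  have hs0 : 0 ≤ s := by positivity
  obtain ⟨g, hg, hgℓ, hg_eq⟩ := exists_measurable_le_lintegral_eq P fun ω => eexp c (ℓ ω)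
  have hbound : ∫⁻ ω, eexp c (ℓ ω) ∂P ≤ ENNReal.ofReal (1 + K * ∑' n, s ^ n) :=
    calc ∫⁻ ω, eexp c (ℓ ω) ∂P = ∑' n, ∫⁻ ω in firstCover P ℓ T n, g ω ∂P := by
          rw [hg_eq, lintegral_eq_tsum_firstCover hp0.le hp1 hb]
      _ ≤ ∑' n, ENNReal.ofReal (K * s ^ n) := ENNReal.tsum_le_tsum fun n =>
          setLIntegral_firstCover_le (by linarith) hp0 hp1.le hr hrc.le ha hb hg hgℓ n
      _ = ENNReal.ofReal (K * ∑' n, s ^ n) := by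
          rw [← ENNReal.ofReal_tsum_of_nonneg (fun n => by positivity)
            ((summable_geometric_of_lt_one hs0 hs).mul_left K), tsum_mul_left]
      _ ≤ _ := ENNReal.ofReal_le_ofReal (le_add_of_nonneg_left zero_le_one)
  exact ⟨hbound, hbound.trans_lt ENNReal.ofReal_lt_top⟩

/-- Abstract exponential-moment estimate: if `𝔼 e^{αT(n)} ≤ Cⁿ`,
`ℙ{ℓ > T(n+1)} ≤ pⁿ`, and `ℓ` is dominated by the stopping times `T(n)` where
finite, then for `r > 1` with `C^{1/r} p^{1−1/r} < 1` and `0 < c` with `rc < α`,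
`𝔼 e^{cℓ} ≤ 1 + C^{1/r} p^{1/r − 1} Σₙ (C^{1/r} p^{1−1/r})ⁿ < ∞`. -/
theorem stmt_6 {Ω : Type*} [MeasurableSpace Ω] (P : Measure Ω)
    [IsProbabilityMeasure P] (ℓ : Ω → ℕ∞) (T : ℕ → Ω → ℕ∞)
    (α C p : ℝ) (hα : 0 < α) (hC : 1 ≤ C) (hp0 : 0 < p) (hp1 : p < 1)
    (ha : ∀ n : ℕ, 1 ≤ n → ∫⁻ ω, eexp α (T n ω) ∂P ≤ ENNReal.ofReal (C ^ n))
    (hb : ∀ n : ℕ, P {ω | T (n + 1) ω < ℓ ω} ≤ ENNReal.ofReal (p ^ n))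
    (hc : ∀ ω, ℓ ω ≠ ⊤ →
      (ℓ ω ≤ T 1 ω ∨ ∃ n : ℕ, T n ω < ℓ ω ∧ ℓ ω ≤ T (n + 1) ω)) :
    ∀ r : ℝ, 1 < r → C ^ (1 / r) * p ^ (1 - 1 / r) < 1 →
      ∀ c : ℝ, 0 < c → r * c < α →
        (∫⁻ ω, eexp c (ℓ ω) ∂P ≤
          ENNReal.ofReal (1 + C ^ (1 / r) * p ^ (1 / r - 1) *
            ∑' n : ℕ, (C ^ (1 / r) * p ^ (1 - 1 / r)) ^ n)) ∧
        (∫⁻ ω, eexp c (ℓ ω) ∂P < ⊤) :=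
  stmt_6_general P ℓ T α C p hC hp0 hp1 ha hb
end

section
/- In the setting of the previous statement, conversely: if ν with polar disintegration ν(dr,du) = μ_r(du) γ(dr) is stationary on ℂⁿ \ {0} for a random norm-preserving linear map U, then for γ-almost every r ∈ (0,∞) the measure μ_r is stationary for the induced Markov chain on the unit sphere S. -/
open MeasureTheory ProbabilityTheory

/-!
Write `ν = ∫ (μ_r pushed forward by u ↦ r • u) dγ(r)` and let `polar v = (‖v‖, ‖v‖⁻¹ • v)`.
Since `γ` lives on `(0, ∞)` and each `μ_r` on the unit sphere, `polar` undoes the scaling and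
pushes `ν` forward to `γ ⊗ μ`. A norm-preserving linear step commutes with scaling and keeps the
sphere, so `ν` driven one step by `P` is the same mixture built from the kernel `r ↦ μ_r P`, and
its polar image is `γ ⊗ (μ P)`. Stationarity of `ν` thus gives `γ ⊗ μ = γ ⊗ (μ P)`, and by
uniqueness of disintegrations (the sphere is countably generated) `μ_r P = μ_r` for `γ`-a.e. `r`.
-/

namespace ProbabilityTheory.Kernel

variable {α β γ : Type*} [MeasurableSpace α] [MeasurableSpace β] [MeasurableSpace γ]

lemma measurable_map_prodMk (κ : Kernel α β) [IsSFiniteKernel κ] {f : α × β → γ}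
    (hf : Measurable f) : Measurable fun a => (κ a).map fun b => f (a, b) := by
  refine Measure.measurable_of_measurable_coe _ fun s hs => ?_
  have hmap (a : α) : (κ a).map (fun b => f (a, b)) s = κ a (Prod.mk a ⁻¹' (f ⁻¹' s)) :=
    Measure.map_apply (hf.comp measurable_prodMk_left) hs
  simpa only [hmap] using measurable_kernel_prodMk_left (hf hs)

lemma comp_apply_compl_eq_zero (κ : Kernel α β) (η : Kernel β β) {s : Set β}
    (hs : MeasurableSet s) {a : α} (hκ : κ a sᶜ = 0) (hη : ∀ b ∈ s, η b sᶜ = 0) :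
    (η ∘ₖ κ) a sᶜ = 0 := by
  rw [comp_apply' _ _ _ hs.compl]
  have hη_ae : ∀ᵐ b ∂κ a, η b sᶜ = 0 := (measure_eq_zero_iff_ae_notMem.1 hκ).mono
    fun b hb => hη b (not_not.1 hb)
  rw [lintegral_congr_ae hη_ae, lintegral_zero]

end ProbabilityTheory.Kernel

lemma MeasureTheory.Measure.map_compProd_eq_bind {α β γ : Type*} [MeasurableSpace α]
    [MeasurableSpace β] [MeasurableSpace γ] (μ : Measure α) [SFinite μ] (κ : Kernel α β)
    [IsSFiniteKernel κ] {f : α × β → γ} (hf : Measurable f) :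
    (μ ⊗ₘ κ).map f = μ.bind fun a => (κ a).map fun b => f (a, b) := by
  ext s hs
  rw [map_apply hf hs, compProd_apply (hf hs),
    bind_apply hs (κ.measurable_map_prodMk hf).aemeasurable]
  exact lintegral_congr fun a => (map_apply (hf.comp measurable_prodMk_left) hs).symm

section Polar

variable {E : Type*} [NormedAddCommGroup E] [NormedSpace ℝ E]

noncomputable def polar (v : E) : ℝ × E := (‖v‖, ‖v‖⁻¹ • v)

lemma polar_smul {r : ℝ} (hr : 0 < r) {u : E} (hu : u ∈ Metric.sphere (0 : E) 1) :
    polar (r • u) = (r, u) := by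
  rw [mem_sphere_zero_iff_norm] at hu
  have hnorm : ‖r • u‖ = r := by rw [norm_smul, hu, Real.norm_of_nonneg hr.le, mul_one]
  rw [polar, hnorm, inv_smul_smul₀ hr.ne']

variable [MeasurableSpace E] [BorelSpace E]

lemma measurable_polar : Measurable (polar : E → ℝ × E) :=
  measurable_norm.prodMk (measurable_norm.inv.smul measurable_id)

/-- The measure `ν(dv)` whose polar disintegration is `κ r (du) γ (dr)`. -/
noncomputable def polarMixture (γ : Measure ℝ) (κ : Kernel ℝ E) : Measure E :=
  γ.bind fun r => (κ r).map (r • ·)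

lemma bind_map_const_smul (η : Kernel E E)
    (hη : ∀ (r : ℝ) (u : E), η (r • u) = (η u).map (r • ·)) (m : Measure E) (r : ℝ) :
    (m.map (r • ·)).bind η = (m.bind η).map (r • ·) := by
  have hr : Measurable fun u : E => r • u := measurable_const_smul r
  ext s hs
  rw [Measure.bind_apply hs η.aemeasurable, lintegral_map (η.measurable_coe hs) hr,
    Measure.map_apply hr hs, Measure.bind_apply (hr hs) η.aemeasurable]
  simp_rw [hη, Measure.map_apply hr hs]

variable [SecondCountableTopology E]

lemma measurable_fst_smul_snd : Measurable fun p : ℝ × E => p.1 • p.2 := by fun_prop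

variable {γ : Measure ℝ} (κ : Kernel ℝ E) [IsSFiniteKernel κ]

lemma polarMixture_eq_map_compProd [SFinite γ] :
    polarMixture γ κ = (γ ⊗ₘ κ).map fun p => p.1 • p.2 :=
  (Measure.map_compProd_eq_bind γ κ measurable_fst_smul_snd).symm

lemma map_polar_polarMixture [SFinite γ] (hγ : ∀ᵐ r ∂γ, 0 < r)
    (hκ : ∀ r, κ r (Metric.sphere 0 1)ᶜ = 0) :
    (polarMixture γ κ).map polar = γ ⊗ₘ κ := by
  have hpolar : (polar ∘ fun p : ℝ × E => p.1 • p.2) =ᵐ[γ ⊗ₘ κ] id := by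
    have hmeas : MeasurableSet {p : ℝ × E | 0 < p.1 ∧ p.2 ∈ Metric.sphere 0 1} :=
      (measurableSet_lt measurable_const measurable_fst).inter
        (measurable_snd Metric.isClosed_sphere.measurableSet)
    have hsphere : ∀ r, ∀ᵐ u ∂κ r, u ∈ Metric.sphere 0 1 := fun r => mem_ae_iff.2 (hκ r)
    filter_upwards [Measure.ae_compProd_of_ae_ae hmeas
      (hγ.mono fun r hr => (hsphere r).mono fun u hu => ⟨hr, hu⟩)] with p hp
    exact polar_smul hp.1 hp.2
  rw [polarMixture_eq_map_compProd, Measure.map_map measurable_polar measurable_fst_smul_snd,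
    Measure.map_congr hpolar, Measure.map_id]

lemma polarMixture_bind (η : Kernel E E)
    (hη : ∀ (r : ℝ) (u : E), η (r • u) = (η u).map (r • ·)) :
    (polarMixture γ κ).bind η = polarMixture γ (η ∘ₖ κ) := by
  rw [polarMixture, Measure.bind_bind
    (κ.measurable_map_prodMk measurable_fst_smul_snd).aemeasurable
    η.aemeasurable]
  simp_rw [bind_map_const_smul η hη]
  rfl

theorem ae_bind_eq_of_polarMixture_bind_eq [IsFiniteMeasure γ] (hγ : ∀ᵐ r ∂γ, 0 < r)
    [IsFiniteKernel κ] (hκ : ∀ r, κ r (Metric.sphere 0 1)ᶜ = 0)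
    (η : Kernel E E) [IsFiniteKernel η]
    (hη_smul : ∀ (r : ℝ) (u : E), η (r • u) = (η u).map (r • ·))
    (hη_sphere : ∀ u ∈ Metric.sphere (0 : E) 1, η u (Metric.sphere 0 1)ᶜ = 0)
    (hstat : (polarMixture γ κ).bind η = polarMixture γ κ) :
    ∀ᵐ r ∂γ, (κ r).bind η = κ r := by
  have hηκ : ∀ r, (η ∘ₖ κ) r (Metric.sphere 0 1)ᶜ = 0 := fun r =>
    κ.comp_apply_compl_eq_zero η Metric.isClosed_sphere.measurableSet (hκ r) hη_sphere
  have hcompProd : γ ⊗ₘ κ = γ ⊗ₘ (η ∘ₖ κ) := by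
    rw [← map_polar_polarMixture κ hγ hκ, ← hstat, polarMixture_bind κ η hη_smul,
      map_polar_polarMixture _ hγ hηκ]
  filter_upwards [Kernel.ae_eq_of_compProd_eq hcompProd] with r hr
  exact hr.symm

end Polar

section RandomLinearMap

variable {Ω E : Type*} [MeasurableSpace Ω] [NormedAddCommGroup E] [NormedSpace ℝ E]
  [MeasurableSpace E] [BorelSpace E] (Pm : Measure Ω) (U : Ω → E →ₗ[ℝ] E)

lemma map_randomLinearMap_smul {u : E} (hU : Measurable fun ω => U ω u) (r : ℝ) :
    Pm.map (fun ω => U ω (r • u)) = (Pm.map fun ω => U ω u).map (r • ·) := by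
  rw [Measure.map_map (measurable_const_smul r) hU]
  simp_rw [map_smul]
  rfl

lemma map_randomLinearMap_compl_sphere {u : E} (hU : Measurable fun ω => U ω u)
    (hU_norm : ∀ᵐ ω ∂Pm, ∀ v, ‖U ω v‖ = ‖v‖) (hu : u ∈ Metric.sphere (0 : E) 1) :
    Pm.map (fun ω => U ω u) (Metric.sphere 0 1)ᶜ = 0 := by
  rw [Measure.map_apply hU Metric.isClosed_sphere.measurableSet.compl]
  refine measure_mono_null ?_ (ae_iff.1 hU_norm)
  intro ω hω hnorm
  apply hω
  rw [mem_sphere_zero_iff_norm] at hu ⊢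
  rw [hnorm u, hu]

end RandomLinearMap

/-- Converse of the polar-decomposition stationarity: if `ν(dr,du) = μ_r(du)γ(dr)`
is stationary on `ℂⁿ ∖ {0}` for a random norm-preserving linear map `U`, then
`γ`-almost every `μ_r` is stationary for the induced chain on the unit sphere;
if moreover the stationary measure `μ` on the sphere is unique, then `μ_r = μ`
for `γ`-a.e. `r`. -/
theorem stmt_12 {n : ℕ} [MeasurableSpace (EuclideanSpace ℂ (Fin n))]
    [BorelSpace (EuclideanSpace ℂ (Fin n))]
    {Ω : Type*} [MeasurableSpace Ω] (Pm : Measure Ω) [IsProbabilityMeasure Pm]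
    (U : Ω → (EuclideanSpace ℂ (Fin n) →ₗ[ℂ] EuclideanSpace ℂ (Fin n)))
    (hUmeas : ∀ z, Measurable fun ω => U ω z)
    (hUnorm : ∀ᵐ ω ∂Pm, ∀ v, ‖U ω v‖ = ‖v‖)
    (P : EuclideanSpace ℂ (Fin n) → Measure (EuclideanSpace ℂ (Fin n)))
    (hP : ∀ z, P z = Pm.map fun ω => U ω z)
    (hPmeas : Measurable P)
    (γ : Measure ℝ) [IsProbabilityMeasure γ] (hγ : γ (Set.Iic (0:ℝ)) = 0)
    (μr : ℝ → Measure (EuclideanSpace ℂ (Fin n)))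
    (hμrmeas : Measurable μr)
    (hμrprob : ∀ r, IsProbabilityMeasure (μr r))
    (hμrS : ∀ r, μr r
      ((Metric.sphere (0 : EuclideanSpace ℂ (Fin n)) 1 : Set (EuclideanSpace ℂ (Fin n)))ᶜ) = 0)
    (hstat : (γ.bind fun r => (μr r).map fun u => r • u).bind P
      = γ.bind fun r => (μr r).map fun u => r • u) :
    (∀ᵐ r ∂γ, (μr r).bind P = μr r) ∧
    (∀ μ : Measure (EuclideanSpace ℂ (Fin n)), IsProbabilityMeasure μ →
      (∀ μ' : Measure (EuclideanSpace ℂ (Fin n)), IsProbabilityMeasure μ' →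
        μ' ((Metric.sphere (0 : EuclideanSpace ℂ (Fin n)) 1 :
          Set (EuclideanSpace ℂ (Fin n)))ᶜ) = 0 →
        μ'.bind P = μ' → μ' = μ) →
      ∀ᵐ r ∂γ, μr r = μ) := by
  let U' : Ω → EuclideanSpace ℂ (Fin n) →ₗ[ℝ] EuclideanSpace ℂ (Fin n) :=
    fun ω => (U ω).restrictScalars ℝ
  let κ : Kernel ℝ (EuclideanSpace ℂ (Fin n)) := ⟨μr, hμrmeas⟩
  let η : Kernel (EuclideanSpace ℂ (Fin n)) (EuclideanSpace ℂ (Fin n)) := ⟨P, hPmeas⟩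
  have : IsMarkovKernel κ := ⟨hμrprob⟩
  have : IsMarkovKernel η := ⟨fun z => by
    rw [Kernel.coe_mk, hP]; exact Measure.isProbabilityMeasure_map (hUmeas z).aemeasurable⟩
  have hγ_pos : ∀ᵐ r ∂γ, 0 < r := ae_iff.2 (measure_mono_null (fun r hr => not_lt.1 hr) hγ)
  have hP_smul : ∀ (r : ℝ) u, P (r • u) = (P u).map (r • ·) := fun r u => by
    rw [hP, hP]; exact map_randomLinearMap_smul Pm U' (hUmeas u) r
  have hP_sphere : ∀ u ∈ Metric.sphere 0 1, P u (Metric.sphere 0 1)ᶜ = 0 := fun u hu => by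
    rw [hP]; exact map_randomLinearMap_compl_sphere Pm U' (hUmeas u) hUnorm hu
  have hstationary : ∀ᵐ r ∂γ, (μr r).bind P = μr r :=
    ae_bind_eq_of_polarMixture_bind_eq κ hγ_pos hμrS η hP_smul hP_sphere hstat
  refine ⟨hstationary, fun μ _ huniq => ?_⟩
  filter_upwards [hstationary] with r hr
  exact huniq (μr r) (hμrprob r) (hμrS r) hr
end
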